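/- arXiv:2206.10275 — 4 statements merged into one kernel-verified Lean document; each statement's English description precedes it below -/
import Mathlib

section
/- Let m ∈ ℕ, let A_ρ be a real m×m matrix such that I + A_ρ is invertible, let a ∈ ℝ^m and ω > 0. Set t_k = kπ/ω for k ∈ ℤ, q̄ = −(1/ω)a, q̂ = (I − A_ρ)(I + A_ρ)⁻¹((1/ω)a). Define x_bls(t) = (1/ω)(1 − cos(ωt))·a and let q_i be the square wave with mean q̄ and amplitude q̂. Then the function x = x_bls + q_i : ℝ → ℝ^m is 2π/ω-periodic, is right-continuous everywhere, is differentiable at every t ∉ {t_k : k ∈ ℤ} with derivative x′(t) = a·sin(ωt), has a left limit x(t_k⁻) at every reset instant t_k, and satisfies the reset rule x(t_k) = A_ρ · x(t_k⁻) at every t_k. (This exhibits the steady-state response of the reset integrator with reset matrix A_ρ to the input a·sin(ωt) as the sum of the base-linear integrator response and a square wave in phase with the input, with mean −a/ω and amplitude (I − A_ρ)(I + A_ρ)⁻¹(a/ω).) -/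
open Real Filter Set Topology Matrix

/-- **Steady-state response of a reset integrator.**
The steady-state response of a reset integrator with reset matrix `Aρ` to the input
`t ↦ sin (ω t) • a` is the sum of the base-linear integrator response
`x_bls t = (1/ω)(1 - cos (ω t)) • a` and a square wave `q_i` in phase with the input,
with mean `-(1/ω) a` and amplitude `(I - Aρ)(I + Aρ)⁻¹ ((1/ω) a)` : the sum
`x = x_bls + q_i` is `2π/ω`-periodic, right-continuous, differentiable away from the
reset instants `t_k = kπ/ω` with derivative `sin (ω t) • a`, has left limits at the
reset instants, and satisfies the reset rule `x (t_k) = Aρ ⬝ x (t_k⁻)` there. -/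
theorem reset_integrator_steady_state (m : ℕ) (Aρ : Matrix (Fin m) (Fin m) ℝ)
    (hinv : IsUnit (1 + Aρ)) (a : Fin m → ℝ) (ω : ℝ) (hω : 0 < ω)
    (qbar qhat : Fin m → ℝ)
    (hqbar : qbar = -(ω⁻¹ • a))
    (hqhat : qhat = ((1 - Aρ) * (1 + Aρ)⁻¹).mulVec (ω⁻¹ • a))
    (x_bls : ℝ → Fin m → ℝ)
    (hx_bls : ∀ t, x_bls t = (ω⁻¹ * (1 - Real.cos (ω * t))) • a)
    (q_i : ℝ → Fin m → ℝ)
    (hq_i : ∀ t, q_i t = if Even ⌊t * ω / Real.pi⌋ then qbar + qhat else qbar - qhat)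
    (x : ℝ → Fin m → ℝ) (hx : ∀ t, x t = x_bls t + q_i t) :
    Function.Periodic x (2 * Real.pi / ω) ∧
    (∀ t : ℝ, ContinuousWithinAt x (Set.Ici t) t) ∧
    (∀ t : ℝ, (∀ k : ℤ, t ≠ k * Real.pi / ω) →
      HasDerivAt x (Real.sin (ω * t) • a) t) ∧
    (∀ k : ℤ, ∃ L : Fin m → ℝ,
      Tendsto x (nhdsWithin ((k : ℝ) * Real.pi / ω) (Set.Iio ((k : ℝ) * Real.pi / ω)))
        (nhds L) ∧
      x ((k : ℝ) * Real.pi / ω) = Aρ.mulVec L) := by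
  have hπ : (0:ℝ) < Real.pi := Real.pi_pos
  have hω0 : ω ≠ 0 := ne_of_gt hω
  have hπ0 : Real.pi ≠ 0 := ne_of_gt hπ
  -- floor characterization
  have hfloor : ∀ (n : ℤ) (s : ℝ), (n:ℝ) * Real.pi / ω ≤ s →
      s < ((n:ℝ)+1) * Real.pi / ω → ⌊s * ω / Real.pi⌋ = n := by
    intro n s h1 h2
    refine Int.floor_eq_iff.mpr ⟨?_, ?_⟩
    · rw [le_div_iff₀ hπ]
      rw [div_le_iff₀ hω] at h1
      linarith
    · rw [div_lt_iff₀ hπ]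
      rw [lt_div_iff₀ hω] at h2
      linarith
  have hmemfloor : ∀ s : ℝ, ((⌊s * ω / Real.pi⌋ : ℝ)) * Real.pi / ω ≤ s ∧
      s < ((⌊s * ω / Real.pi⌋ : ℝ) + 1) * Real.pi / ω := by
    intro s
    constructor
    · rw [div_le_iff₀ hω]
      have h := Int.floor_le (s * ω / Real.pi)
      rw [le_div_iff₀ hπ] at h
      linarith
    · rw [lt_div_iff₀ hω]
      have h := Int.lt_floor_add_one (s * ω / Real.pi)
      rw [div_lt_iff₀ hπ] at h
      linarith
  have hx_bls_cont : Continuous x_bls := by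
    have : x_bls = fun t => (ω⁻¹ * (1 - Real.cos (ω * t))) • a := funext hx_bls
    rw [this]; fun_prop
  -- key matrix identity
  have key : qhat + Aρ.mulVec qhat = ω⁻¹ • (a - Aρ.mulVec a) := by
    have hdet : IsUnit (1 + Aρ).det := (Matrix.isUnit_iff_isUnit_det _).mp hinv
    have hmul : (1 + Aρ) * (1 + Aρ)⁻¹ = 1 := Matrix.mul_nonsing_inv _ hdet
    have h1 : (1 + Aρ) * ((1 - Aρ) * (1 + Aρ)⁻¹) = 1 - Aρ := by
      have hcomm : (1 + Aρ) * (1 - Aρ) = (1 - Aρ) * (1 + Aρ) := by noncomm_ring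
      rw [← Matrix.mul_assoc, hcomm, Matrix.mul_assoc, hmul, Matrix.mul_one]
    have h2 : (1 + Aρ).mulVec qhat = (1 - Aρ).mulVec (ω⁻¹ • a) := by
      rw [hqhat, Matrix.mulVec_mulVec, h1]
    simpa [Matrix.add_mulVec, Matrix.sub_mulVec, Matrix.one_mulVec,
      Matrix.mulVec_smul] using h2
  refine ⟨?_, ?_, ?_, ?_⟩
  · -- periodic
    intro t
    rw [hx, hx, hx_bls, hx_bls, hq_i, hq_i]
    have e1 : ω * (t + 2 * Real.pi / ω) = ω * t + 2 * Real.pi := by field_simp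
    have e2 : (t + 2 * Real.pi / ω) * ω / Real.pi = t * ω / Real.pi + ((2:ℤ):ℝ) := by
      push_cast; field_simp
    rw [e1, Real.cos_add_two_pi, e2, Int.floor_add_intCast]
    have e3 : Even (⌊t * ω / Real.pi⌋ + 2) ↔ Even ⌊t * ω / Real.pi⌋ := by
      simp [Int.even_add]
    rw [if_congr e3 rfl rfl]
  · -- right continuity
    intro t
    obtain ⟨hl, hu⟩ := hmemfloor t
    set n := ⌊t * ω / Real.pi⌋ with hn
    set v : Fin m → ℝ := if Even n then qbar + qhat else qbar - qhat with hv
    have hev : x =ᶠ[𝓝[≥] t] fun s => x_bls s + v := by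
      filter_upwards [Ico_mem_nhdsGE hu] with s hs
      rw [hx, hq_i, hfloor n s (le_trans hl hs.1) hs.2]
    have hpt : x t = x_bls t + v := by rw [hx, hq_i, ← hn]
    exact ((hx_bls_cont.continuousAt.add continuousAt_const).continuousWithinAt).congr_of_eventuallyEq
      hev hpt
  · -- derivative
    intro t ht
    obtain ⟨hl, hu⟩ := hmemfloor t
    set n := ⌊t * ω / Real.pi⌋ with hn
    have hl' : (n:ℝ) * Real.pi / ω < t := lt_of_le_of_ne hl (Ne.symm (ht n))
    set v : Fin m → ℝ := if Even n then qbar + qhat else qbar - qhat with hv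
    have hev : (fun s => x_bls s + v) =ᶠ[𝓝 t] x := by
      filter_upwards [Ioo_mem_nhds hl' hu] with s hs
      rw [hx, hq_i, hfloor n s hs.1.le hs.2]
    have h1 : HasDerivAt (fun s : ℝ => ω * s) ω t := by
      simpa using (hasDerivAt_id t).const_mul ω
    have h2 := h1.cos
    have h3 := ((hasDerivAt_const t (1:ℝ)).sub h2).const_mul ω⁻¹
    have h4 := (h3.smul_const a).add_const v
    have hscal : ω⁻¹ * (0 - (-Real.sin (ω * t) * ω)) = Real.sin (ω * t) := by
      field_simp; ring
    rw [hscal] at h4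
    have hxf : (fun s => x_bls s + v) = fun s => (ω⁻¹ * (1 - Real.cos (ω * s))) • a + v := by
      funext s; rw [hx_bls]
    replace h4 : HasDerivAt (fun s => (ω⁻¹ * (1 - Real.cos (ω * s))) • a + v) (Real.sin (ω * t) • a) t := h4
    rw [← hxf] at h4
    exact h4.congr_of_eventuallyEq hev.symm
  · -- reset instants
    intro k
    have hk1 : ((k:ℝ) - 1) * Real.pi / ω < (k:ℝ) * Real.pi / ω := by
      rw [div_lt_div_iff₀ hω hω]
      have : ((k:ℝ) - 1) * Real.pi < (k:ℝ) * Real.pi :=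
        mul_lt_mul_of_pos_right (by linarith) hπ
      nlinarith [hω, this]
    set tk : ℝ := (k:ℝ) * Real.pi / ω with htk
    set v' : Fin m → ℝ := if Even (k - 1) then qbar + qhat else qbar - qhat with hv'
    have hev : x =ᶠ[𝓝[<] tk] fun s => x_bls s + v' := by
      filter_upwards [Ioo_mem_nhdsLT hk1] with s hs
      have e : (((k - 1 : ℤ) : ℝ) + 1) = (k:ℝ) := by push_cast; ring
      have hfl := hfloor (k - 1) s (by push_cast; exact hs.1.le) (by rw [e]; exact hs.2)
      rw [hx, hq_i, hfl]
    have hten : Tendsto x (𝓝[<] tk) (𝓝 (x_bls tk + v')) := by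
      refine Tendsto.congr' hev.symm ?_
      exact ((hx_bls_cont.continuousAt.add continuousAt_const).tendsto).mono_left
        nhdsWithin_le_nhds
    refine ⟨x_bls tk + v', hten, ?_⟩
    -- value at tk
    have efl : ⌊tk * ω / Real.pi⌋ = k := by
      have : tk * ω / Real.pi = (k:ℝ) := by rw [htk]; field_simp
      rw [this, Int.floor_intCast]
    have ecos : Real.cos (ω * tk) = (-1:ℝ) ^ k := by
      have e : ω * tk = (k:ℝ) * Real.pi := by rw [htk]; field_simp
      rw [e]
      simpa using Real.cos_int_mul_pi_sub 0 k
    have hxval : x tk = (ω⁻¹ * (1 - (-1:ℝ)^k)) • a +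
        (if Even k then qbar + qhat else qbar - qhat) := by
      rw [hx, hx_bls, hq_i, efl, ecos]
    have hlval : x_bls tk + v' = (ω⁻¹ * (1 - (-1:ℝ)^k)) • a + v' := by
      rw [hx_bls, ecos]
    rw [hxval, hlval, hv', hqbar]
    rcases Int.even_or_odd k with hk | hk
    · rw [if_pos hk, if_neg (by simpa [Int.even_sub_one] using hk)]
      rw [hk.neg_one_zpow]
      simp only [Matrix.mulVec_add, Matrix.mulVec_sub, Matrix.mulVec_neg,
        Matrix.mulVec_smul]
      linear_combination (norm := module) key
    · have hk' : ¬ Even k := Int.not_even_iff_odd.mpr hk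
      rw [if_neg hk', if_pos (by simpa [Int.even_sub_one] using hk')]
      rw [hk.neg_one_zpow]
      simp only [Matrix.mulVec_add, Matrix.mulVec_sub, Matrix.mulVec_neg,
        Matrix.mulVec_smul]
      linear_combination (norm := module) -key
end

section
/- Let A be a real m×m matrix, ω > 0 and t_k = kπ/ω for k ∈ ℤ. Suppose q : ℝ → ℝ^m is right-continuous, 2π/ω-periodic, has left limits q(t_k⁻) at every t_k, and is differentiable on each open interval (t_k, t_{k+1}) with q′(t) = A q(t) there. Then there exist a continuous function x_q : ℝ → ℝ^m and a function w : ℝ → ℝ^m that is constant on each interval [t_k, t_{k+1}) such that q = x_q + w on ℝ and x_q′(t) = A (x_q(t) + w(t)) for every t ∉ {t_k}. If moreover q(t + π/ω) = −q(t) for all t, then w can be chosen to be a square wave, i.e. there exist w̄, ŵ ∈ ℝ^m with w = w̄ + ŵ on each [t_{2n}, t_{2n+1}) and w = w̄ − ŵ on each [t_{2n+1}, t_{2n+2}). (This realizes the nonlinear component of a reset state-space system as the response of the linear system with state equation ẋ_q = A(x_q + w) and output x_q + w — the transfer function T_q(s) = (sI − A)⁻¹ s — driven by a piecewise-constant square-wave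 input.) -/
open Real Filter Set Topology Matrix

namespace ResetAux

variable {V : Type*} [AddCommGroup V]

/-- forward partial sums: value at `n : ℕ`. -/
def cpos (J : ℤ → V) : ℕ → V
  | 0 => 0
  | n+1 => cpos J n + J (n+1)

/-- backward partial sums: value at `-(n : ℕ)`. -/
def cneg (J : ℤ → V) : ℕ → V
  | 0 => 0
  | n+1 => cneg J n - J (-(n:ℤ))

/-- cumulative sums over `ℤ` with step `J`. -/
def cfull (J : ℤ → V) : ℤ → V
  | Int.ofNat n => cpos J n
  | Int.negSucc n => cneg J (n+1)

lemma cfull_step (J : ℤ → V) (k : ℤ) : cfull J k = cfull J (k-1) + J k := by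
  rcases k with n | n
  · rcases n with _ | n
    · have h : (Int.ofNat 0) - 1 = Int.negSucc 0 := by decide
      rw [h]
      show cpos J 0 = cneg J 1 + J (Int.ofNat 0)
      simp [cpos, cneg]
    · have h : (Int.ofNat (n+1)) - 1 = Int.ofNat n := by
        simp [Int.natCast_succ]
      rw [h]
      show cpos J (n+1) = cpos J n + J (Int.ofNat (n+1))
      simp [cpos, Int.natCast_succ]
  · have h : (Int.negSucc n) - 1 = Int.negSucc (n+1) := by
      simp [Int.negSucc_eq]; ring
    rw [h]
    show cneg J (n+1) = cneg J (n+2) + J (Int.negSucc n)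
    have : cneg J (n+2) = cneg J (n+1) - J (-(n+1:ℕ):ℤ) := by
      show cneg J ((n+1)+1) = _
      simp [cneg]
    rw [this]
    have h2 : (-(n+1:ℕ):ℤ) = Int.negSucc n := by
      simp [Int.negSucc_eq]
    rw [h2]
    abel

lemma floor_eq_of_mem {ω : ℝ} (hω : 0 < ω) {k : ℤ} {t : ℝ}
    (h1 : (k:ℝ) * Real.pi / ω ≤ t) (h2 : t < ((k:ℝ) + 1) * Real.pi / ω) :
    ⌊t * ω / Real.pi⌋ = k := by
  have hπ := Real.pi_pos
  rw [Int.floor_eq_iff]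
  constructor
  · rw [le_div_iff₀ hπ]
    have := (div_le_iff₀ hω).mp h1
    linarith
  · rw [div_lt_iff₀ hπ]
    have := (lt_div_iff₀ hω).mp h2
    linarith

lemma self_mem_Ico {ω : ℝ} (hω : 0 < ω) (t : ℝ) :
    ((⌊t * ω / Real.pi⌋ : ℝ) * Real.pi / ω ≤ t ∧
      t < ((⌊t * ω / Real.pi⌋ : ℝ) + 1) * Real.pi / ω) := by
  have hπ := Real.pi_pos
  have h1 := Int.floor_le (t * ω / Real.pi)
  have h2 := Int.lt_floor_add_one (t * ω / Real.pi)
  constructor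
  · rw [div_le_iff₀ hω]
    have := (le_div_iff₀ hπ).mp h1
    linarith
  · rw [lt_div_iff₀ hω]
    have := (div_lt_iff₀ hπ).mp h2
    linarith

lemma key {m : ℕ} (A : Matrix (Fin m) (Fin m) ℝ) {ω : ℝ} (hω : 0 < ω)
    (q : ℝ → Fin m → ℝ)
    (hq_rc : ∀ t : ℝ, ContinuousWithinAt q (Set.Ici t) t)
    (hq_deriv : ∀ k : ℤ, ∀ t ∈ Set.Ioo ((k : ℝ) * Real.pi / ω) (((k : ℝ) + 1) * Real.pi / ω),
      HasDerivAt q (A.mulVec (q t)) t)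
    (L : ℤ → Fin m → ℝ)
    (hL : ∀ k : ℤ, Tendsto q (nhdsWithin ((k : ℝ) * Real.pi / ω)
        (Set.Iio ((k : ℝ) * Real.pi / ω))) (nhds (L k)))
    (c : ℤ → Fin m → ℝ)
    (hc : ∀ k : ℤ, c k = c (k-1) + q ((k : ℝ) * Real.pi / ω) - L k) :
    Continuous (fun t => q t - c ⌊t * ω / Real.pi⌋) ∧
    (∀ t : ℝ, (∀ k : ℤ, t ≠ (k : ℝ) * Real.pi / ω) →
      HasDerivAt (fun t => q t - c ⌊t * ω / Real.pi⌋) (A.mulVec (q t)) t) := by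
  have hπ := Real.pi_pos
  set x : ℝ → Fin m → ℝ := fun t => q t - c ⌊t * ω / Real.pi⌋ with hx
  have hlt : ∀ k : ℤ, (k:ℝ) * Real.pi / ω < ((k:ℝ) + 1) * Real.pi / ω := by
    intro k
    rw [div_lt_div_iff₀ hω hω]
    nlinarith [mul_pos hπ hω]
  have hflk : ∀ k : ℤ, ⌊(k:ℝ) * Real.pi / ω * ω / Real.pi⌋ = k := by
    intro k
    exact floor_eq_of_mem hω le_rfl (hlt k)
  have hderiv : ∀ t : ℝ, (∀ k : ℤ, t ≠ (k : ℝ) * Real.pi / ω) →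
      HasDerivAt x (A.mulVec (q t)) t := by
    intro t ht
    set k : ℤ := ⌊t * ω / Real.pi⌋ with hk
    obtain ⟨h1, h2⟩ := self_mem_Ico hω t
    have h1' : (k:ℝ) * Real.pi / ω < t := lt_of_le_of_ne h1 (fun h => ht k h.symm)
    have hmem : Set.Ioo ((k:ℝ) * Real.pi / ω) (((k:ℝ) + 1) * Real.pi / ω) ∈ 𝓝 t :=
      isOpen_Ioo.mem_nhds ⟨h1', h2⟩
    have hev : x =ᶠ[𝓝 t] fun s => q s - c k := by
      filter_upwards [hmem] with s hs
      simp only [hx]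
      rw [floor_eq_of_mem hω hs.1.le hs.2]
    exact HasDerivAt.congr_of_eventuallyEq
      ((hq_deriv k t ⟨h1', h2⟩).sub_const (c k)) hev
  constructor
  · rw [continuous_iff_continuousAt]
    intro t
    by_cases hres : ∃ k : ℤ, t = (k : ℝ) * Real.pi / ω
    · obtain ⟨k, rfl⟩ := hres
      rw [continuousAt_iff_continuous_left_right]
      constructor
      · rw [← Iio_insert, continuousWithinAt_insert_self]
        have hx_val : x ((k:ℝ) * Real.pi / ω) = L k - c (k-1) := by
          simp only [hx, hflk k]
          rw [hc k]; abel
        have hmem : Set.Ioo (((k:ℝ)-1) * Real.pi / ω) ((k:ℝ) * Real.pi / ω)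
            ∈ 𝓝[<] ((k:ℝ) * Real.pi / ω) := by
          apply Ioo_mem_nhdsLT_of_mem
          constructor
          · have := hlt (k-1)
            have heq : ((k:ℝ) - 1 + 1) * Real.pi / ω = (k:ℝ) * Real.pi / ω := by ring
            push_cast at this ⊢
            linarith
          · exact le_rfl
        have hev : (fun s => q s - c (k-1)) =ᶠ[𝓝[<] ((k:ℝ) * Real.pi / ω)] x := by
          filter_upwards [hmem] with s hs
          simp only [hx]
          have : ⌊s * ω / Real.pi⌋ = k - 1 := by
            have heq : ((k:ℝ) - 1 + 1) * Real.pi / ω = (k:ℝ) * Real.pi / ω := by ring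
            apply floor_eq_of_mem hω
            · push_cast; linarith [hs.1]
            · push_cast; linarith [hs.2]
          rw [this]
        have htend : Tendsto (fun s => q s - c (k-1)) (𝓝[<] ((k:ℝ) * Real.pi / ω))
            (𝓝 (L k - c (k-1))) := (hL k).sub_const _
        have := htend.congr' hev
        rw [← hx_val] at this
        exact this
      · have hmem : Set.Ico ((k:ℝ) * Real.pi / ω) (((k:ℝ)+1) * Real.pi / ω)
            ∈ 𝓝[≥] ((k:ℝ) * Real.pi / ω) :=
          Ico_mem_nhdsGE_of_mem ⟨le_rfl, hlt k⟩
        have hbase : ContinuousWithinAt (fun s => q s - c k)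
            (Set.Ici ((k:ℝ) * Real.pi / ω)) ((k:ℝ) * Real.pi / ω) :=
          (hq_rc _).sub continuousWithinAt_const
        apply hbase.congr_of_eventuallyEq
        · apply Filter.mem_of_superset hmem
          intro s hs
          simp only [Set.mem_setOf_eq, hx]
          rw [floor_eq_of_mem hω hs.1 hs.2]
        · simp only [hx, hflk k]
    · push_neg at hres
      exact (hderiv t hres).continuousAt
  · exact hderiv

end ResetAux

/-- **The nonlinear component of a reset system as the response of `T_q(s) = (sI-A)⁻¹s`
to a piecewise-constant input.**
If `q` is right-continuous, `2π/ω`-periodic, has left limits at the reset instants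
`t_k = kπ/ω`, and satisfies `q' = A q` on each interval `(t_k, t_{k+1})`, then
`q = x_q + w` where `x_q` is continuous with `x_q' = A (x_q + w)` away from the reset
instants and `w` is constant on each interval `[t_k, t_{k+1})`.  If moreover `q` is
anti-periodic with half period `π/ω`, then `w` can be chosen to be a square wave. -/
theorem reset_nonlinearity_as_linear_response (m : ℕ)
    (A : Matrix (Fin m) (Fin m) ℝ) (ω : ℝ) (hω : 0 < ω)
    (q : ℝ → Fin m → ℝ)
    (hq_rc : ∀ t : ℝ, ContinuousWithinAt q (Set.Ici t) t)
    (hq_per : Function.Periodic q (2 * Real.pi / ω))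
    (hq_lim : ∀ k : ℤ, ∃ L : Fin m → ℝ,
      Tendsto q (nhdsWithin ((k : ℝ) * Real.pi / ω) (Set.Iio ((k : ℝ) * Real.pi / ω)))
        (nhds L))
    (hq_deriv : ∀ k : ℤ, ∀ t ∈ Set.Ioo ((k : ℝ) * Real.pi / ω) (((k : ℝ) + 1) * Real.pi / ω),
      HasDerivAt q (A.mulVec (q t)) t) :
    (∃ (x_q w : ℝ → Fin m → ℝ),
      Continuous x_q ∧
      (∀ k : ℤ, ∀ t ∈ Set.Ico ((k : ℝ) * Real.pi / ω) (((k : ℝ) + 1) * Real.pi / ω),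
        w t = w ((k : ℝ) * Real.pi / ω)) ∧
      (∀ t, q t = x_q t + w t) ∧
      (∀ t : ℝ, (∀ k : ℤ, t ≠ (k : ℝ) * Real.pi / ω) →
        HasDerivAt x_q (A.mulVec (x_q t + w t)) t)) ∧
    ((∀ t : ℝ, q (t + Real.pi / ω) = -(q t)) →
      ∃ (x_q : ℝ → Fin m → ℝ) (wbar what : Fin m → ℝ),
        Continuous x_q ∧
        (∀ t, q t = x_q t +
          (if Even ⌊t * ω / Real.pi⌋ then wbar + what else wbar - what)) ∧
        (∀ t : ℝ, (∀ k : ℤ, t ≠ (k : ℝ) * Real.pi / ω) →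
          HasDerivAt x_q (A.mulVec (x_q t +
            (if Even ⌊t * ω / Real.pi⌋ then wbar + what else wbar - what))) t)) := by
  classical
  have hπ := Real.pi_pos
  have hlt : ∀ k : ℤ, (k:ℝ) * Real.pi / ω < ((k:ℝ) + 1) * Real.pi / ω := by
    intro k
    rw [div_lt_div_iff₀ hω hω]
    nlinarith [mul_pos hπ hω]
  have hflk : ∀ k : ℤ, ⌊(k:ℝ) * Real.pi / ω * ω / Real.pi⌋ = k := by
    intro k
    exact ResetAux.floor_eq_of_mem hω le_rfl (hlt k)
  set L : ℤ → Fin m → ℝ := fun k => (hq_lim k).choose with hLdef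
  have hL : ∀ k : ℤ, Tendsto q (nhdsWithin ((k : ℝ) * Real.pi / ω)
      (Set.Iio ((k : ℝ) * Real.pi / ω))) (nhds (L k)) := fun k => (hq_lim k).choose_spec
  set J : ℤ → Fin m → ℝ := fun k => q ((k:ℝ) * Real.pi / ω) - L k with hJdef
  constructor
  · -- part 1
    set c : ℤ → Fin m → ℝ := ResetAux.cfull J with hcdef
    have hc : ∀ k : ℤ, c k = c (k-1) + q ((k : ℝ) * Real.pi / ω) - L k := by
      intro k
      have h2 : c k = c (k-1) + J k := ResetAux.cfull_step J k
      rw [h2]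
      exact (add_sub_assoc _ _ _).symm
    obtain ⟨hcont, hder⟩ := ResetAux.key A hω q hq_rc hq_deriv L hL c hc
    refine ⟨fun t => q t - c ⌊t * ω / Real.pi⌋, fun t => c ⌊t * ω / Real.pi⌋,
      hcont, ?_, ?_, ?_⟩
    · intro k t ht
      simp only
      rw [ResetAux.floor_eq_of_mem hω ht.1 ht.2, hflk k]
    · intro t
      simp only
      rw [sub_add_cancel]
    · intro t ht
      have h := hder t ht
      have e : (fun t => q t - c ⌊t * ω / Real.pi⌋) t + (fun t => c ⌊t * ω / Real.pi⌋) t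
          = q t := by
        simp only
        rw [sub_add_cancel]
      rw [e]
      exact h
  · -- part 2
    intro hanti
    have hstep_q : ∀ k : ℤ, q (((k:ℝ)+1) * Real.pi / ω) = -(q ((k:ℝ) * Real.pi / ω)) := by
      intro k
      rw [show ((k:ℝ)+1) * Real.pi / ω = (k:ℝ) * Real.pi / ω + Real.pi / ω by ring]
      exact hanti _
    have hq' : ∀ t : ℝ, q t = -(q (t - Real.pi / ω)) := by
      intro t
      have := hanti (t - Real.pi / ω)
      rw [sub_add_cancel] at this
      exact this
    have hstep_L : ∀ k : ℤ, L (k+1) = -(L k) := by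
      intro k
      have h1 : Tendsto (fun t : ℝ => t - Real.pi / ω)
          (𝓝[<] (((k:ℝ)+1) * Real.pi / ω)) (𝓝[<] ((k:ℝ) * Real.pi / ω)) := by
        apply tendsto_nhdsWithin_of_tendsto_nhds_of_eventually_within
        · have h2 : Tendsto (fun t : ℝ => t - Real.pi / ω)
              (𝓝 (((k:ℝ)+1) * Real.pi / ω))
              (𝓝 (((k:ℝ)+1) * Real.pi / ω - Real.pi / ω)) :=
            (continuous_id.sub continuous_const).tendsto _
          rw [show ((k:ℝ)+1) * Real.pi / ω - Real.pi / ω = (k:ℝ) * Real.pi / ω by ring] at h2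
          exact h2.mono_left nhdsWithin_le_nhds
        · filter_upwards [self_mem_nhdsWithin] with t ht
          simp only [Set.mem_Iio] at ht ⊢
          have heq : ((k:ℝ)+1) * Real.pi / ω - Real.pi / ω = (k:ℝ) * Real.pi / ω := by ring
          linarith
      have h3 : Tendsto q (𝓝[<] (((k:ℝ)+1) * Real.pi / ω)) (𝓝 (-(L k))) := by
        have := ((hL k).comp h1).neg
        exact Filter.Tendsto.congr (fun t => (hq' t).symm) this
      have h4 := hL (k+1)
      push_cast at h4
      exact tendsto_nhds_unique h4 h3
    have hJstep : ∀ k : ℤ, J (k+1) = -(J k) := by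
      intro k
      simp only [hJdef]
      push_cast
      rw [hstep_q k, hstep_L k]
      abel
    have step : ∀ k : ℤ, J k = (if Even k then -(J 1) else J 1) →
        J (k+1) = (if Even (k+1) then -(J 1) else J 1) := by
      intro k hk
      rw [hJstep k, hk]
      by_cases h : Even k <;> simp [h, Int.even_add_one]
    have step' : ∀ k : ℤ, J (k+1) = (if Even (k+1) then -(J 1) else J 1) →
        J k = (if Even k then -(J 1) else J 1) := by
      intro k hk
      have h2 : J k = -(J (k+1)) := by rw [hJstep k, neg_neg]
      rw [h2, hk]
      by_cases h : Even k <;> simp [h, Int.even_add_one, ← Int.not_even_iff_odd]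
    have P : ∀ k : ℤ, J k = (if Even k then -(J 1) else J 1) := by
      intro k
      induction k using Int.induction_on with
      | zero =>
        apply step' 0
        have h1 : ¬ Even (1:ℤ) := by decide
        norm_num [h1]
      | succ i ih => exact step i ih
      | pred i ih =>
        apply step' (-(i:ℤ) - 1)
        rw [show (-(i:ℤ) - 1) + 1 = -(i:ℤ) by ring]
        exact ih
    set c2 : ℤ → Fin m → ℝ := fun k => if Even k then 0 else J 1 with hc2def
    have hc2 : ∀ k : ℤ, c2 k = c2 (k-1) + q ((k : ℝ) * Real.pi / ω) - L k := by
      intro k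
      have hP := P k
      by_cases h : Even k
      · have h' : ¬ Even (k-1) := by
          rw [Int.even_sub_one]
          simpa using h
        have hqL : q ((k:ℝ) * Real.pi / ω) - L k = -(J 1) := by
          have h3 : J k = -(J 1) := by rw [hP, if_pos h]
          exact h3
        simp only [hc2def, if_pos h, if_neg h']
        rw [add_sub_assoc, hqL]
        simp
      · have h' : Even (k-1) := by
          rw [Int.even_sub_one]
          exact h
        have hqL : q ((k:ℝ) * Real.pi / ω) - L k = J 1 := by
          have h3 : J k = J 1 := by rw [hP, if_neg h]
          exact h3
        simp only [hc2def, if_neg h, if_pos h']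
        rw [add_sub_assoc, hqL, zero_add]
    obtain ⟨hcont2, hder2⟩ := ResetAux.key A hω q hq_rc hq_deriv L hL c2 hc2
    have hplus : ((fun i => J 1 i / 2) + fun i => -(J 1 i / 2) : Fin m → ℝ) = 0 := by
      funext i
      simp
    have hminus : ((fun i => J 1 i / 2) - fun i => -(J 1 i / 2) : Fin m → ℝ) = J 1 := by
      funext i
      simp only [Pi.sub_apply]
      ring
    have hif : ∀ n : ℤ, (if Even n then
        ((fun i => J 1 i / 2) + fun i => -(J 1 i / 2) : Fin m → ℝ)
        else ((fun i => J 1 i / 2) - fun i => -(J 1 i / 2))) = c2 n := by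
      intro n
      by_cases hh : Even n
      · rw [if_pos hh, hplus, hc2def]
        simp [hh]
      · rw [if_neg hh, hminus, hc2def]
        simp [hh]
    refine ⟨fun t => q t - c2 ⌊t * ω / Real.pi⌋,
      fun i => J 1 i / 2, fun i => -(J 1 i / 2), hcont2, ?_, ?_⟩
    · intro t
      rw [hif ⌊t * ω / Real.pi⌋]
      simp only
      rw [sub_add_cancel]
    · intro t ht
      have h := hder2 t ht
      rw [hif ⌊t * ω / Real.pi⌋]
      have e : (fun t => q t - c2 ⌊t * ω / Real.pi⌋) t + c2 ⌊t * ω / Real.pi⌋ = q t := by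
        simp only
        rw [sub_add_cancel]
      rw [e]
      exact h
end

section
/- Let A be a real m×m matrix, ω > 0, t_k = kπ/ω for k ∈ ℤ, and let w : ℝ → ℝ^m be the square wave with mean w̄ and amplitude ŵ. Let x_q : ℝ → ℝ^m be continuous, 2π/ω-periodic, and differentiable at every t ∉ {t_k} with x_q′(t) = A (x_q(t) + w(t)). Set q = x_q + w. Then for every integer k ≥ 1 such that ikω is not an eigenvalue of A, the k-th complex Fourier coefficient c_k(q) = (ω/(2π)) ∫₀^{2π/ω} q(t) e^{−ikωt} dt satisfies: c_k(q) = ikω (ikωI − A)⁻¹ c_k(w); in particular c_k(q) = 0 for even k ≥ 2, and c_k(q) = (2ω/π)(ikωI − A)⁻¹ ŵ for odd k. (Hence the k-th harmonic of the nonlinear contribution q of a reset system equals the transfer function T_q(s) = (sI − A)⁻¹ s evaluated at s = ikω applied to the k-th Fourier coefficient of the square wave.) -/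
open Real Matrix Set MeasureTheory

namespace ResetAux

lemma ae_ne (r : ℝ) : ∀ᵐ t : ℝ ∂volume, t ≠ r := by
  refine MeasureTheory.ae_iff.2 ?_
  have : {t : ℝ | ¬ t ≠ r} = {r} := by ext t; simp
  rw [this]
  exact measure_singleton r

lemma ae_mem_Ioo {p r : ℝ} (hpr : p ≤ r) :
    ∀ᵐ t : ℝ ∂volume, t ∈ Set.uIoc p r → t ∈ Set.Ioo p r := by
  filter_upwards [ae_ne r] with t ht hmem
  rw [Set.uIoc_of_le hpr] at hmem
  exact ⟨hmem.1, lt_of_le_of_ne hmem.2 ht⟩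

lemma integral_congr_Ioo {n : ℕ} {p r : ℝ} (hpr : p ≤ r) {f g : ℝ → Fin n → ℂ}
    (h : ∀ t ∈ Set.Ioo p r, f t = g t) :
    ∫ t in p..r, f t = ∫ t in p..r, g t := by
  apply intervalIntegral.integral_congr_ae
  filter_upwards [ae_mem_Ioo hpr] with t ht hmem
  exact h t (ht hmem)

lemma intervalIntegrable_congr_Ioo {n : ℕ} {p r : ℝ} (hpr : p ≤ r) {f g : ℝ → Fin n → ℂ}
    (h : ∀ t ∈ Set.Ioo p r, f t = g t) (hg : IntervalIntegrable g volume p r) :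
    IntervalIntegrable f volume p r := by
  rw [intervalIntegrable_iff] at hg ⊢
  refine hg.congr_fun_ae ?_
  rw [Filter.EventuallyEq, MeasureTheory.ae_restrict_iff' measurableSet_uIoc]
  filter_upwards [ae_mem_Ioo hpr] with t ht hmem
  exact (h t (ht hmem)).symm

end ResetAux

set_option maxHeartbeats 2000000 in
/-- **Harmonics of the nonlinear component of a reset system.**
Let `w` be the square wave with mean `w̄` and amplitude `ŵ` (reset instants
`t_k = kπ/ω`), let `x_q` be continuous, `2π/ω`-periodic and satisfy
`x_q' = A (x_q + w)` away from the reset instants, and set `q = x_q + w`.  Then for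
every `k ≥ 1` such that `ikω` is not an eigenvalue of `A`, the `k`-th Fourier
coefficient of `q` is `ikω (ikωI - A)⁻¹` applied to that of `w`; in particular it
vanishes for even `k` and equals `(2ω/π)(ikωI - A)⁻¹ ŵ` for odd `k`. -/
theorem reset_nonlinearity_harmonics (m : ℕ)
    (A : Matrix (Fin m) (Fin m) ℝ) (ω : ℝ) (hω : 0 < ω)
    (wbar what : Fin m → ℝ) (w : ℝ → Fin m → ℝ)
    (hw : ∀ t : ℝ, w t = if Even ⌊t * ω / Real.pi⌋ then wbar + what else wbar - what)
    (x_q : ℝ → Fin m → ℝ)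
    (hcont : Continuous x_q)
    (hper : Function.Periodic x_q (2 * Real.pi / ω))
    (hderiv : ∀ t : ℝ, (∀ k : ℤ, t ≠ (k : ℝ) * Real.pi / ω) →
      HasDerivAt x_q (A.mulVec (x_q t + w t)) t)
    (q : ℝ → Fin m → ℝ) (hq : ∀ t, q t = x_q t + w t)
    (c : (ℝ → Fin m → ℝ) → ℤ → Fin m → ℂ)
    (hc : ∀ g k, c g k = ((ω / (2 * Real.pi) : ℝ) : ℂ) •
      ∫ t in (0 : ℝ)..(2 * Real.pi / ω),
        Complex.exp (-Complex.I * k * ω * t) • (fun i => ((g t i : ℝ) : ℂ))) :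
    ∀ k : ℤ, 1 ≤ k →
      (Complex.I * k * ω) ∉ spectrum ℂ (A.map Complex.ofReal) →
      (c q k = (Complex.I * k * ω) •
        (((Complex.I * k * ω) • (1 : Matrix (Fin m) (Fin m) ℂ) -
          A.map Complex.ofReal)⁻¹.mulVec (c w k)) ∧
      (Even k → c q k = 0) ∧
      (Odd k → c q k = ((2 * ω / Real.pi : ℝ) : ℂ) •
        (((Complex.I * k * ω) • (1 : Matrix (Fin m) (Fin m) ℂ) -
          A.map Complex.ofReal)⁻¹.mulVec (fun i => ((what i : ℝ) : ℂ))))) := by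
  intro k hk hspec
  have hπ : (0:ℝ) < Real.pi := Real.pi_pos
  set a : ℝ := Real.pi / ω with ha_def
  set T : ℝ := 2 * Real.pi / ω with hT_def
  have ha_pos : 0 < a := div_pos hπ hω
  have haT : a < T := by
    rw [ha_def, hT_def, div_lt_div_iff₀ hω hω]
    nlinarith
  have hT_pos : 0 < T := lt_trans ha_pos haT
  set s : ℂ := Complex.I * k * ω with hs_def
  have hk0 : (k:ℂ) ≠ 0 := by
    exact_mod_cast (by omega : (k:ℤ) ≠ 0)
  have hω0 : (ω:ℂ) ≠ 0 := by exact_mod_cast hω.ne'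
  have hs0 : s ≠ 0 := by
    simp [hs_def, Complex.I_ne_zero, hk0, hω0]
  set Ac : Matrix (Fin m) (Fin m) ℂ := A.map Complex.ofReal with hAc_def
  set M : Matrix (Fin m) (Fin m) ℂ := s • (1 : Matrix (Fin m) (Fin m) ℂ) - Ac with hM_def
  have hMunit : IsUnit M := by
    have := spectrum.notMem_iff.mp hspec
    rwa [Algebra.algebraMap_eq_smul_one] at this
  have hMdet : IsUnit M.det := (Matrix.isUnit_iff_isUnit_det M).mp hMunit
  -- complexification CLM
  set cl : (Fin m → ℝ) →L[ℝ] (Fin m → ℂ) :=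
    ContinuousLinearMap.pi (fun i : Fin m => Complex.ofRealCLM.comp (ContinuousLinearMap.proj i))
    with hcl_def
  have hcl_apply : ∀ v : Fin m → ℝ, cl v = fun i => ((v i : ℝ) : ℂ) := fun v => rfl
  have hcast : ∀ v : Fin m → ℝ, cl (A.mulVec v) = Ac.mulVec (cl v) := by
    intro v
    funext i
    simp only [hcl_apply, Matrix.mulVec, dotProduct, hAc_def, Matrix.map_apply]
    push_cast
    rfl
  set xc : ℝ → Fin m → ℂ := fun t => cl (x_q t) with hxc_def
  have hxc_cont : Continuous xc := cl.continuous.comp hcont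
  set E : ℝ → ℂ := fun t => Complex.exp (-(s * t)) with hE_def
  have hE_deriv : ∀ t : ℝ, HasDerivAt E (-s * E t) t := by
    intro t
    have h0 : HasDerivAt (fun u : ℝ => ((u:ℂ))) 1 t := by
      exact Complex.ofRealCLM.hasDerivAt (x := t)
    have h1 : HasDerivAt (fun u : ℝ => -(s * (u:ℂ))) (-s) t := by
      have h01 := (h0.const_mul s).neg
      rw [mul_one] at h01
      exact h01
    simpa [hE_def, mul_comm] using h1.cexp
  have hE_cont : Continuous E := by
    apply Complex.continuous_exp.comp
    continuity
  -- the matrix as a continuous linear map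
  set L : (Fin m → ℂ) →L[ℂ] (Fin m → ℂ) :=
    LinearMap.toContinuousLinearMap (Matrix.mulVecLin Ac) with hL_def
  have hL_apply : ∀ v, L v = Ac.mulVec v := fun v => rfl
  -- FTC on reset-free intervals
  have key : ∀ p r : ℝ, p ≤ r → ∀ vc : Fin m → ℂ,
      (∀ t ∈ Set.Ioo p r, (∀ j : ℤ, t ≠ (j:ℝ) * Real.pi / ω)) →
      (∀ t ∈ Set.Ioo p r, cl (w t) = vc) →
      ∫ t in p..r, (E t • L (xc t + vc) + (-s * E t) • xc t)
        = E r • xc r - E p • xc p := by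
    intro p r hpr vc hres hwv
    apply intervalIntegral.integral_eq_sub_of_hasDeriv_right_of_le hpr
    · exact ((hE_cont.smul hxc_cont).continuousOn)
    · intro t ht
      have h2 : HasDerivAt xc (L (xc t + vc)) t := by
        have hd := cl.hasFDerivAt.comp_hasDerivAt t (hderiv t (hres t ht))
        have e : cl (A.mulVec (x_q t + w t)) = L (xc t + vc) := by
          rw [hcast, hL_apply, map_add, hwv t ht]
        rw [e] at hd
        exact hd
      exact ((hE_deriv t).smul h2).hasDerivWithinAt
    · apply Continuous.intervalIntegrable
      exact (hE_cont.smul (L.continuous.comp (hxc_cont.add continuous_const))).add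
        ((continuous_const.mul hE_cont).smul hxc_cont)

  -- interval membership facts
  have hu1 : ∀ t ∈ Set.Ioo (0:ℝ) a, t * ω / Real.pi ∈ Set.Ioo (0:ℝ) 1 := by
    intro t ht
    constructor
    · exact div_pos (mul_pos ht.1 hω) hπ
    · rw [div_lt_one hπ]
      have := mul_lt_mul_of_pos_right ht.2 hω
      rwa [ha_def, div_mul_cancel₀ _ hω.ne'] at this
  have hu2 : ∀ t ∈ Set.Ioo a T, t * ω / Real.pi ∈ Set.Ioo (1:ℝ) 2 := by
    intro t ht
    constructor
    · rw [lt_div_iff₀ hπ, one_mul]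
      have := mul_lt_mul_of_pos_right ht.1 hω
      rwa [ha_def, div_mul_cancel₀ _ hω.ne'] at this
    · rw [div_lt_iff₀ hπ]
      have := mul_lt_mul_of_pos_right ht.2 hω
      rwa [hT_def, div_mul_cancel₀ _ hω.ne'] at this
  have hres1 : ∀ t ∈ Set.Ioo (0:ℝ) a, ∀ j : ℤ, t ≠ (j:ℝ) * Real.pi / ω := by
    intro t ht j heq
    have hj : t * ω / Real.pi = (j:ℝ) := by rw [heq]; field_simp
    have h2 := hu1 t ht
    rw [hj] at h2
    have hj0 : (0:ℤ) < j := by exact_mod_cast h2.1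
    have hj1 : j < 1 := by exact_mod_cast h2.2
    omega
  have hres2 : ∀ t ∈ Set.Ioo a T, ∀ j : ℤ, t ≠ (j:ℝ) * Real.pi / ω := by
    intro t ht j heq
    have hj : t * ω / Real.pi = (j:ℝ) := by rw [heq]; field_simp
    have h2 := hu2 t ht
    rw [hj] at h2
    have hj0 : (1:ℤ) < j := by exact_mod_cast h2.1
    have hj1 : j < 2 := by exact_mod_cast h2.2
    omega
  -- square wave values on the two half-periods
  set v1 : Fin m → ℂ := cl (wbar + what) with hv1_def
  set v2 : Fin m → ℂ := cl (wbar - what) with hv2_def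
  have hwv1 : ∀ t ∈ Set.Ioo (0:ℝ) a, cl (w t) = v1 := by
    intro t ht
    have hfl : ⌊t * ω / Real.pi⌋ = 0 := by
      rw [Int.floor_eq_zero_iff]
      exact ⟨(hu1 t ht).1.le, (hu1 t ht).2⟩
    rw [hw t, hfl]
    simp [hv1_def]
  have hwv2 : ∀ t ∈ Set.Ioo a T, cl (w t) = v2 := by
    intro t ht
    have hfl : ⌊t * ω / Real.pi⌋ = 1 := by
      rw [Int.floor_eq_iff]
      constructor
      · exact_mod_cast (hu2 t ht).1.le
      · push_cast; exact_mod_cast (hu2 t ht).2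
    rw [hw t, hfl]
    simp [hv2_def, Int.even_iff]
  -- the two FTC identities
  have F1 := key 0 a ha_pos.le v1 hres1 hwv1
  have F2 := key a T haT.le v2 hres2 hwv2
  -- boundary values
  have hE0 : E 0 = 1 := by simp [hE_def]
  have hET : E T = 1 := by
    have h1 : -(s * ((T:ℝ):ℂ)) = ((-k : ℤ):ℂ) * (2 * (Real.pi:ℂ) * Complex.I) := by
      rw [hs_def, hT_def]
      push_cast
      field_simp
    rw [hE_def]
    show Complex.exp (-(s * ((T:ℝ):ℂ))) = 1
    rw [h1]
    exact Complex.exp_int_mul_two_pi_mul_I (-k)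
  have hxcT : xc T = xc 0 := by
    have := hper 0
    rw [zero_add] at this
    rw [hxc_def]
    show cl (x_q T) = cl (x_q 0)
    rw [this]
  have hsum : (∫ t in (0:ℝ)..a, (E t • L (xc t + v1) + (-s * E t) • xc t))
      + (∫ t in a..T, (E t • L (xc t + v2) + (-s * E t) • xc t)) = 0 := by
    rw [F1, F2, hET, hxcT, hE0]
    abel
  -- abbreviations for piece integrals
  set X1 : Fin m → ℂ := ∫ t in (0:ℝ)..a, E t • xc t with hX1_def
  set X2 : Fin m → ℂ := ∫ t in a..T, E t • xc t with hX2_def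
  set e1 : ℂ := ∫ t in (0:ℝ)..a, E t with he1_def
  set e2 : ℂ := ∫ t in a..T, E t with he2_def
  have hExc_int : ∀ p r : ℝ, IntervalIntegrable (fun t => E t • xc t) volume p r :=
    fun p r => (hE_cont.smul hxc_cont).intervalIntegrable p r
  have hsplit : ∀ (p r : ℝ) (v : Fin m → ℂ),
      ∫ t in p..r, (E t • L (xc t + v) + (-s * E t) • xc t)
        = L ((∫ t in p..r, E t • xc t) + (∫ t in p..r, E t) • v)
          + (-s) • ∫ t in p..r, E t • xc t := by
    intro p r v
    have hint1 : IntervalIntegrable (fun t => E t • L (xc t + v)) volume p r :=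
      (hE_cont.smul (L.continuous.comp (hxc_cont.add continuous_const))).intervalIntegrable p r
    have hint2 : IntervalIntegrable (fun t => (-s * E t) • xc t) volume p r :=
      ((continuous_const.mul hE_cont).smul hxc_cont).intervalIntegrable p r
    rw [intervalIntegral.integral_add hint1 hint2]
    congr 1
    · have heq : (fun t => E t • L (xc t + v)) = fun t => L (E t • (xc t + v)) := by
        funext t
        exact (L.map_smul (E t) (xc t + v)).symm
      rw [heq]
      rw [L.intervalIntegral_comp_comm (f := fun t => E t • (xc t + v))
        ((hE_cont.smul (hxc_cont.add continuous_const)).intervalIntegrable p r)]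
      congr 1
      have heq2 : (fun t => E t • (xc t + v)) = fun t => E t • xc t + E t • v := by
        funext t
        rw [smul_add]
      rw [heq2, intervalIntegral.integral_add (g := fun t => E t • v) (hExc_int p r)
        ((hE_cont.smul continuous_const).intervalIntegrable p r),
        intervalIntegral.integral_smul_const]
    · have heq : (fun t => (-s * E t) • xc t) = fun t => (-s) • (E t • xc t) := by
        funext t
        rw [smul_smul]
      rw [heq, intervalIntegral.integral_smul]
  rw [hsplit 0 a v1, hsplit a T v2, ← hX1_def, ← hX2_def, ← he1_def, ← he2_def] at hsum
  -- main linear identity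
  set Wv : Fin m → ℂ := e1 • v1 + e2 • v2 with hWv_def
  set X : Fin m → ℂ := X1 + X2 with hX_def
  have hLXW : L (X + Wv) = s • X := by
    have h1 : L (X1 + e1 • v1) + L (X2 + e2 • v2) = L (X + Wv) := by
      rw [← map_add]
      congr 1
      rw [hX_def, hWv_def]
      abel
    have h2 : L (X1 + e1 • v1) + (-s) • X1 + (L (X2 + e2 • v2) + (-s) • X2) = 0 := hsum
    have h3 : L (X + Wv) + (-s) • X = 0 := by
      rw [← h1, hX_def, smul_add]
      rw [← h2]
      abel
    have h4 := congrArg (· + s • X) h3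
    simpa [add_assoc, neg_smul] using h4
  -- Fourier coefficient of q
  have hintq1 : IntervalIntegrable (fun t => E t • (xc t + cl (w t))) volume 0 a :=
    ResetAux.intervalIntegrable_congr_Ioo ha_pos.le (g := fun t => E t • (xc t + v1))
      (fun t ht => by rw [hwv1 t ht])
      ((hE_cont.smul (hxc_cont.add continuous_const)).intervalIntegrable 0 a)
  have hintq2 : IntervalIntegrable (fun t => E t • (xc t + cl (w t))) volume a T :=
    ResetAux.intervalIntegrable_congr_Ioo haT.le (g := fun t => E t • (xc t + v2))
      (fun t ht => by rw [hwv2 t ht])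
      ((hE_cont.smul (hxc_cont.add continuous_const)).intervalIntegrable a T)
  have hpiece : ∀ (p r : ℝ), p ≤ r → ∀ (v : Fin m → ℂ),
      (∀ t ∈ Set.Ioo p r, cl (w t) = v) →
      ∫ t in p..r, E t • (xc t + cl (w t))
        = (∫ t in p..r, E t • xc t) + (∫ t in p..r, E t) • v := by
    intro p r hpr v hv
    rw [ResetAux.integral_congr_Ioo hpr (g := fun t => E t • (xc t + v))
      (fun t ht => by rw [hv t ht])]
    have heq2 : (fun t => E t • (xc t + v)) = fun t => E t • xc t + E t • v := by
      funext t
      rw [smul_add]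
    rw [heq2, intervalIntegral.integral_add (g := fun t => E t • v) (hExc_int p r)
      ((hE_cont.smul continuous_const).intervalIntegrable p r),
      intervalIntegral.integral_smul_const]
  set Wv : Fin m → ℂ := e1 • v1 + e2 • v2 with hWv_def
  have hcq : c q k = ((ω / (2 * Real.pi) : ℝ) : ℂ) • (X + Wv) := by
    rw [hc q k]
    congr 1
    have hiq : (fun t : ℝ => Complex.exp (-Complex.I * k * ω * t) • (fun i => ((q t i : ℝ) : ℂ)))
        = fun t => E t • (xc t + cl (w t)) := by
      funext t
      have h1 : Complex.exp (-Complex.I * k * ω * t) = E t := by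
        rw [hE_def]
        show _ = Complex.exp (-(s * (t:ℂ)))
        rw [hs_def]
        ring_nf
      have h2 : (fun i => ((q t i : ℝ) : ℂ)) = xc t + cl (w t) := by
        rw [← hcl_apply, hq t, map_add]
      rw [h1, h2]
    rw [hiq, ← intervalIntegral.integral_add_adjacent_intervals hintq1 hintq2,
      hpiece 0 a ha_pos.le v1 hwv1, hpiece a T haT.le v2 hwv2,
      ← hX1_def, ← hX2_def, ← he1_def, ← he2_def, hX_def, hWv_def]
    abel
  have hcw : c w k = ((ω / (2 * Real.pi) : ℝ) : ℂ) • Wv := by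
    rw [hc w k]
    congr 1
    have hiw : (fun t : ℝ => Complex.exp (-Complex.I * k * ω * t) • (fun i => ((w t i : ℝ) : ℂ)))
        = fun t => E t • cl (w t) := by
      funext t
      have h1 : Complex.exp (-Complex.I * k * ω * t) = E t := by
        rw [hE_def]
        show _ = Complex.exp (-(s * (t:ℂ)))
        rw [hs_def]
        ring_nf
      rw [h1, hcl_apply]
    have hintw1 : IntervalIntegrable (fun t => E t • cl (w t)) volume 0 a :=
      ResetAux.intervalIntegrable_congr_Ioo ha_pos.le (g := fun t => E t • v1)
        (fun t ht => by rw [hwv1 t ht])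
        ((hE_cont.smul continuous_const).intervalIntegrable 0 a)
    have hintw2 : IntervalIntegrable (fun t => E t • cl (w t)) volume a T :=
      ResetAux.intervalIntegrable_congr_Ioo haT.le (g := fun t => E t • v2)
        (fun t ht => by rw [hwv2 t ht])
        ((hE_cont.smul continuous_const).intervalIntegrable a T)
    rw [hiw, ← intervalIntegral.integral_add_adjacent_intervals hintw1 hintw2,
      ResetAux.integral_congr_Ioo ha_pos.le (g := fun t => E t • v1)
        (fun t ht => by rw [hwv1 t ht]),
      ResetAux.integral_congr_Ioo haT.le (g := fun t => E t • v2)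
        (fun t ht => by rw [hwv2 t ht]),
      intervalIntegral.integral_smul_const, intervalIntegral.integral_smul_const,
      ← he1_def, ← he2_def, hWv_def]
  -- main algebraic identity
  have hmain : M.mulVec (X + Wv) = s • Wv := by
    rw [hM_def, Matrix.sub_mulVec, Matrix.smul_mulVec, Matrix.one_mulVec,
      ← hL_apply, hLXW, smul_add]
    abel
  have hIq : X + Wv = M⁻¹.mulVec (s • Wv) := by
    have h1 : M⁻¹.mulVec (M.mulVec (X + Wv)) = X + Wv := by
      rw [Matrix.mulVec_mulVec, Matrix.nonsing_inv_mul M hMdet, Matrix.one_mulVec]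
    rw [← h1, hmain]
  have hint_exp : ∀ p r : ℝ, (∫ t in p..r, E t) = (E p - E r) / s := by
    intro p r
    have hder : ∀ t ∈ Set.uIcc p r, HasDerivAt (fun u => -(s⁻¹) * E u) (E t) t := by
      intro t _
      have h := (hE_deriv t).const_mul (-(s⁻¹))
      have h2 : -s⁻¹ * (-s * E t) = E t := by
        rw [← mul_assoc, neg_mul_neg, inv_mul_cancel₀ hs0, one_mul]
      rw [h2] at h
      exact h
    rw [intervalIntegral.integral_eq_sub_of_hasDerivAt hder (hE_cont.intervalIntegrable p r)]
    field_simp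
    ring
  have hEa_pow : E a = ((-1 : ℂ)) ^ (-k) := by
    have h1 : -(s * ((a:ℝ):ℂ)) = ((-k : ℤ):ℂ) * ((Real.pi:ℂ) * Complex.I) := by
      rw [hs_def, ha_def]
      push_cast
      field_simp
    rw [hE_def]
    show Complex.exp (-(s * ((a:ℝ):ℂ))) = _
    rw [h1, Complex.exp_int_mul, Complex.exp_pi_mul_I]
  refine ⟨?_, ?_, ?_⟩
  · rw [hcq, hcw, hIq, Matrix.mulVec_smul, Matrix.mulVec_smul, smul_comm s]
  · -- even case
    intro hke
    have hEa : E a = 1 := by rw [hEa_pow]; exact Even.neg_one_zpow hke.neg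
    have he1v : e1 = 0 := by rw [he1_def, hint_exp, hE0, hEa, sub_self, zero_div]
    have he2v : e2 = 0 := by rw [he2_def, hint_exp, hET, hEa, sub_self, zero_div]
    have hWv0 : Wv = 0 := by rw [hWv_def, he1v, he2v, zero_smul, zero_smul, add_zero]
    rw [hcq, hIq, hWv0, smul_zero, Matrix.mulVec_zero, smul_zero]
  · -- odd case
    intro hko
    have hEa : E a = -1 := by rw [hEa_pow]; exact Odd.neg_one_zpow hko.neg
    have he1v : e1 = 2 / s := by rw [he1_def, hint_exp, hE0, hEa]; norm_num
    have he2v : e2 = -(2 / s) := by rw [he2_def, hint_exp, hET, hEa]; ring_nf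
    have hWvv : Wv = ((4:ℂ) / s) • (cl what) := by
      rw [hWv_def, he1v, he2v, hv1_def, hv2_def, map_add, map_sub]
      module
    have h4 : s • (((4:ℂ) / s) • cl what) = (4:ℂ) • cl what := by
      rw [smul_smul]
      congr 1
      field_simp
    have hsc : ((ω / (2 * Real.pi) : ℝ) : ℂ) * 4 = ((2 * ω / Real.pi : ℝ) : ℂ) := by
      rw [show ((4:ℂ)) = ((4:ℝ):ℂ) by norm_num, ← Complex.ofReal_mul]
      congr 1
      field_simp
      ring
    rw [hcq, hIq, hWvv, h4, Matrix.mulVec_smul, smul_smul, hsc, ← hcl_apply]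
end

section
/- Let A be a real m×m matrix and T > 0 such that I − exp(TA) is invertible, and let u : ℝ → ℝ^m be continuous with u(t + T/2) = −u(t) for all t. If x : ℝ → ℝ^m is a T-periodic differentiable function with x′(t) = A x(t) + u(t) for all t, then x is anti-periodic with half period T/2: x(t + T/2) = −x(t) for all t ∈ ℝ. -/
open Real Matrix

attribute [local instance] Matrix.linftyOpNormedRing Matrix.linftyOpNormedAlgebra

/-- **Anti-periodicity of the periodic response to an anti-periodic input.**
If `I - exp(TA)` is invertible, `u` is continuous with `u(t + T/2) = -u(t)`, and `x`
is a `T`-periodic solution of `x' = A x + u`, then `x` is anti-periodic with half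
period `T/2`: `x(t + T/2) = -x(t)` for all `t`. -/
theorem periodic_solution_antiperiodic (m : ℕ)
    (A : Matrix (Fin m) (Fin m) ℝ) (T : ℝ) (hT : 0 < T)
    (hinv : IsUnit (1 - NormedSpace.exp (T • A)))
    (u : ℝ → Fin m → ℝ) (hu : Continuous u)
    (hu_anti : ∀ t : ℝ, u (t + T / 2) = -u t)
    (x : ℝ → Fin m → ℝ)
    (hx : ∀ t : ℝ, HasDerivAt x (A.mulVec (x t) + u t) t)
    (hx_per : Function.Periodic x T) :
    ∀ t : ℝ, x (t + T / 2) = -x t := by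
  -- the auxiliary function `y t = x (t + T/2) + x t`
  set y : ℝ → Fin m → ℝ := fun t => x (t + T / 2) + x t with hy_def
  -- `y` satisfies the homogeneous linear ODE
  have hy : ∀ t : ℝ, HasDerivAt y (A.mulVec (y t)) t := by
    intro t
    have h1 : HasDerivAt (fun s => x (s + T / 2))
        ((1 : ℝ) • (A.mulVec (x (t + T / 2)) + u (t + T / 2))) t :=
      HasDerivAt.scomp t (hx (t + T / 2)) ((hasDerivAt_id t).add_const (T / 2))
    have h2 := (h1.add (hx t))
    convert h2 using 1
    case e'_4 => rfl
    case e'_5 => rfl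
    case e'_6 => rfl
    case e'_8 => rfl
    rw [one_smul, hu_anti, hy_def]
    simp [Matrix.mulVec_add]
    abel
  -- `y` is `T`-periodic
  have hy_per : Function.Periodic y T := by
    intro t
    simp only [hy_def]
    have : t + T + T / 2 = t + T / 2 + T := by ring
    rw [this, hx_per, hx_per]
  set c : Fin m → ℝ := y 0 with hc_def
  -- the candidate solution `g t = exp (t • A) *ᵥ c`
  -- the linear map `M ↦ M *ᵥ c`, as a continuous linear map
  let L : Matrix (Fin m) (Fin m) ℝ →L[ℝ] (Fin m → ℝ) :=
    LinearMap.toContinuousLinearMap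
      { toFun := fun M => M.mulVec c
        map_add' := fun M N => Matrix.add_mulVec M N c
        map_smul' := fun r M => (Matrix.smul_mulVec r M c) }
  have hLapp : ∀ M : Matrix (Fin m) (Fin m) ℝ, L M = M.mulVec c := fun _ => rfl
  set g : ℝ → Fin m → ℝ := fun t => (NormedSpace.exp (t • A)).mulVec c with hg_def
  have hg : ∀ t : ℝ, HasDerivAt g (A.mulVec (g t)) t := by
    intro t
    have hM : HasDerivAt (fun s : ℝ => NormedSpace.exp (s • A))
        (A * NormedSpace.exp (t • A)) t := hasDerivAt_exp_smul_const' A t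
    have := (L.hasFDerivAt.comp_hasDerivAt t hM)
    convert this using 1
    case e'_4 => rfl
    case e'_5 => rfl
    case e'_6 => rfl
    case e'_8 => rfl
    exact Matrix.mulVec_mulVec c A _
  -- uniqueness of solutions of the ODE `z' = A z`
  let CLM : (Fin m → ℝ) →L[ℝ] (Fin m → ℝ) := LinearMap.toContinuousLinearMap A.mulVecLin
  have hCLM : ∀ z, CLM z = A.mulVec z := fun _ => rfl
  have hlip : ∀ t : ℝ, LipschitzWith ‖CLM‖₊ (fun z => A.mulVec z) := by
    intro t
    have := CLM.lipschitz
    exact this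
  have huniq : Set.EqOn y g (Set.Icc 0 T) := by
    apply ODE_solution_unique (v := fun _ z => A.mulVec z) (hlip)
    · exact (continuous_iff_continuousAt.2 fun t => (hy t).continuousAt).continuousOn
    · exact fun t _ => (hy t).hasDerivWithinAt
    · exact (continuous_iff_continuousAt.2 fun t => (hg t).continuousAt).continuousOn
    · exact fun t _ => (hg t).hasDerivWithinAt
    · simp [hg_def, hc_def]
  -- conclude `c = 0`
  have hyT : y T = c := hy_per.eq.trans rfl
  have hgT : g T = (NormedSpace.exp (T • A)).mulVec c := rfl
  have hkey : (1 - NormedSpace.exp (T • A)).mulVec c = 0 := by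
    have h1 : y T = g T := huniq ⟨le_of_lt hT, le_refl T⟩
    rw [hyT, hgT] at h1
    rw [Matrix.sub_mulVec, Matrix.one_mulVec, ← h1]
    simp
  have hc0 : c = 0 := by
    obtain ⟨B, hB⟩ := hinv.exists_left_inv
    calc c = (1 : Matrix (Fin m) (Fin m) ℝ).mulVec c := (Matrix.one_mulVec c).symm
    _ = (B * (1 - NormedSpace.exp (T • A))).mulVec c := by rw [hB]
    _ = B.mulVec ((1 - NormedSpace.exp (T • A)).mulVec c) := (Matrix.mulVec_mulVec c B _).symm
    _ = 0 := by rw [hkey, Matrix.mulVec_zero]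
  -- hence `y = 0` on `[0, T]`, and by periodicity everywhere
  have hg0 : ∀ t, g t = 0 := by
    intro t; rw [hg_def]; simp [hc0]
  have hyIcc : ∀ t ∈ Set.Icc (0:ℝ) T, y t = 0 := fun t ht => (huniq ht).trans (hg0 t)
  have hy0 : ∀ t : ℝ, y t = 0 := by
    intro t
    obtain ⟨s, hs, hst⟩ := hy_per.exists_mem_Ico₀ hT t
    rw [hst]
    exact hyIcc s ⟨hs.1, le_of_lt hs.2⟩
  intro t
  have h := hy0 t
  simp only [hy_def] at h
  exact eq_neg_of_add_eq_zero_left h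
end
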